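/- Let k be a field of characteristic p, G a finite p-group, and N a normal subgroup of G. Define the relative lower central series γ_1^G(N) = G, γ_{n+1}^G(N) = [γ_n^G(N), N], and ideals J_1(N,G) = I(N)I(G), J_{n+1}(N,G) = I(N)J_n + J_n I(N). Then for every n ≥ 1, J_n(N,G) = ∑_{i=1}^{n} I(N)^{n+1−i} · (I(γ_i^G(N))·kG). -/

import Mathlib

/-- The relative lower central series: `γ_1^G(N) = G`, `γ_{n+1}^G(N) = [γ_n^G(N), N]`.
Here `gammaRel N i` is `γ_{i+1}^G(N)`. -/
def gammaRel {G : Type*} [Group G] (N : Subgroup G) : ℕ → Subgroup G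
  | 0 => ⊤
  | n + 1 => ⁅gammaRel N n, N⁆

/-- The ideals `J_n(N,G)`: `J_1 = I(N)·I(G)`, `J_{n+1} = I(N)·J_n + J_n·I(N)`.
Here `Jrel IN IG n` is `J_{n+1}`. -/
def Jrel {k R : Type*} [CommSemiring k] [Semiring R] [Algebra k R]
    (IN IG : Submodule k R) : ℕ → Submodule k R
  | 0 => IN * IG
  | n + 1 => IN * Jrel IN IG n + Jrel IN IG n * IN

/-!
Write `I = I(N)` and `K i = I(γ_{i+1}^G(N))·kG`. The whole proof rests on the identity
`I * K i + K i * I = I * K i + K (i + 1)` of `k`-submodules of `kG`. It comes from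
`(a - 1)(b - 1) = (b - 1)(a - 1) + ([a, b] - 1)·ba` together with `kG·I = I·kG`, which holds
because `N` is normal. Given the identity, a formal computation in the idempotent semiring of
submodules shows that `S n = ∑_{i ≤ n} I ^ (n + 1 - i) * K i` satisfies
`S (n + 1) = I * S n + S n * I`, the recursion defining `J`.
-/

open Finset

section Semiring

variable {R : Type*} [Semiring R]

def gradedSum (a : R) (K : ℕ → R) (n : ℕ) : R :=
  ∑ i ∈ range (n + 1), a ^ (n + 1 - i) * K i

theorem gradedSum_succ (a : R) (K : ℕ → R) (n : ℕ) :
    gradedSum a K (n + 1) = a * gradedSum a K n + a * K (n + 1) := by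
  rw [gradedSum, sum_range_succ, gradedSum, mul_sum, Nat.add_sub_cancel_left, pow_one]
  congr 1
  refine sum_congr rfl fun i hi => ?_
  rw [mem_range] at hi
  rw [show n + 1 + 1 - i = n + 1 - i + 1 by omega, pow_succ', mul_assoc]

theorem gradedSum_succ' (a : R) (K : ℕ → R) (n : ℕ) :
    gradedSum a K (n + 1) = gradedSum a (fun i => K (i + 1)) n + a ^ (n + 2) * K 0 := by
  simp only [gradedSum, sum_range_succ' _ (n + 1), Nat.add_sub_add_right, Nat.sub_zero]

theorem mul_gradedSum_add_gradedSum_mul {a : R} {K : ℕ → R}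
    (hK : ∀ i, a * K i + K i * a = a * K i + K (i + 1)) (n : ℕ) :
    a * gradedSum a K n + gradedSum a K n * a =
      a * gradedSum a K n + gradedSum a (fun i => K (i + 1)) n := by
  simp only [gradedSum, mul_sum, sum_mul, ← sum_add_distrib]
  refine sum_congr rfl fun i _ => ?_
  rw [← mul_assoc, ← pow_succ', pow_succ, mul_assoc, mul_assoc, ← mul_add, hK, mul_add]

end Semiring

theorem mul_gradedSum_add_gradedSum_mul_eq_succ {R : Type*} [IdemSemiring R] {a : R} {K : ℕ → R}
    (hK : ∀ i, a * K i + K i * a = a * K i + K (i + 1)) (n : ℕ) :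
    a * gradedSum a K n + gradedSum a K n * a = gradedSum a K (n + 1) := by
  rw [mul_gradedSum_add_gradedSum_mul hK]
  refine le_antisymm (add_le ?_ ?_) ?_
  · exact (gradedSum_succ a K n).ge.trans' le_self_add
  · exact (gradedSum_succ' a K n).ge.trans' le_self_add
  · have hK0 : a ^ (n + 2) * K 0 ≤ a * gradedSum a K n := by
      rw [pow_succ', mul_assoc]
      exact mul_le_mul_right (single_le_sum (f := fun i => a ^ (n + 1 - i) * K i)
        (fun _ _ => zero_le) (mem_range.2 n.succ_pos)) a
    rw [gradedSum_succ']
    exact add_le le_add_self (hK0.trans le_self_add)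

theorem Jrel_eq_gradedSum {k A : Type*} [CommSemiring k] [Semiring A] [Algebra k A]
    {IN IG : Submodule k A} {K : ℕ → Submodule k A} (h0 : IG = K 0)
    (hK : ∀ i, IN * K i + K i * IN = IN * K i + K (i + 1)) (n : ℕ) :
    Jrel IN IG n = gradedSum IN K n := by
  induction n with
  | zero => rw [Jrel, gradedSum, sum_range_one, pow_one, h0]
  | succ n ih => rw [Jrel, ih, mul_gradedSum_add_gradedSum_mul_eq_succ hK]

open Submodule MonoidAlgebra
open scoped commutatorElement

namespace Submodule

variable {k A : Type*} [CommSemiring k] [Semiring A] [Algebra k A]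

theorem le_mul_top (M : Submodule k A) : M ≤ M * ⊤ :=
  (mul_one M).ge.trans (mul_le_mul_right le_top _)

theorem top_mul_top : (⊤ : Submodule k A) * ⊤ = ⊤ :=
  top_unique (le_mul_top ⊤)

theorem mul_top_mul_top (M : Submodule k A) : M * ⊤ * ⊤ = M * ⊤ := by
  rw [mul_assoc, top_mul_top]

end Submodule

namespace MonoidAlgebra

variable {k : Type*} [CommRing k] {G : Type*} [Group G]

variable (k) in
/-- `I(H)`: the augmentation ideal of `kH`, viewed inside `kG`. -/
noncomputable def augSubmodule (H : Subgroup G) : Submodule k (MonoidAlgebra k G) :=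
  span k {z | ∃ h ∈ H, z = of k G h - 1}

theorem span_range_of : span k (Set.range (of k G)) = ⊤ := by
  rw [eq_top_iff]
  rintro x -
  induction x using MonoidAlgebra.induction_on with
  | of g => exact subset_span ⟨g, rfl⟩
  | add x y hx hy => exact add_mem hx hy
  | smul r x hx => exact smul_mem _ r hx

theorem span_mul_top_le {s : Set (MonoidAlgebra k G)} {P : Submodule k (MonoidAlgebra k G)}
    (h : ∀ x ∈ s, ∀ g, x * of k G g ∈ P) : span k s * ⊤ ≤ P := by
  rw [← span_range_of, span_mul_span, span_le]
  rintro _ ⟨x, hx, _, ⟨g, rfl⟩, rfl⟩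
  exact h x hx g

theorem top_mul_span_le {s : Set (MonoidAlgebra k G)} {P : Submodule k (MonoidAlgebra k G)}
    (h : ∀ x ∈ s, ∀ g, of k G g * x ∈ P) : ⊤ * span k s ≤ P := by
  rw [← span_range_of, span_mul_span, span_le]
  rintro _ ⟨_, ⟨g, rfl⟩, x, hx, rfl⟩
  exact h x hx g

theorem augSubmodule_top_mul_top : augSubmodule k (⊤ : Subgroup G) * ⊤ = augSubmodule k ⊤ := by
  refine le_antisymm (span_mul_top_le ?_) (le_mul_top _)
  rintro _ ⟨h, -, rfl⟩ g
  rw [sub_mul, one_mul, ← map_mul, ← sub_sub_sub_cancel_right _ _ (1 : MonoidAlgebra k G)]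
  exact sub_mem (subset_span ⟨h * g, trivial, rfl⟩) (subset_span ⟨g, trivial, rfl⟩)

theorem augSubmodule_mul_top_comm (H : Subgroup G) [H.Normal] :
    augSubmodule k H * ⊤ = ⊤ * augSubmodule k H := by
  refine le_antisymm (span_mul_top_le ?_) (top_mul_span_le ?_)
  · rintro _ ⟨h, hh, rfl⟩ g
    have : (of k G h - 1) * of k G g = of k G g * (of k G (g⁻¹ * h * g) - 1) := by
      simp only [mul_sub, sub_mul, ← map_mul, mul_one, one_mul]
      congr 2
      group
    rw [this]
    exact mul_mem_mul trivial (subset_span ⟨_, by simpa using ‹H.Normal›.conj_mem h hh g⁻¹, rfl⟩)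
  · rintro _ ⟨h, hh, rfl⟩ g
    have : of k G g * (of k G h - 1) = (of k G (g * h * g⁻¹) - 1) * of k G g := by
      simp only [mul_sub, sub_mul, ← map_mul, mul_one, one_mul]
      congr 2
      group
    rw [this]
    exact mul_mem_mul (subset_span ⟨_, ‹H.Normal›.conj_mem h hh g, rfl⟩) trivial

theorem of_sub_one_mul_of_sub_one (a b : G) :
    (of k G a - 1) * (of k G b - 1) =
      (of k G b - 1) * (of k G a - 1) + (of k G ⁅a, b⁆ - 1) * of k G (b * a) := by
  have hab : of k G a * of k G b = of k G ⁅a, b⁆ * of k G (b * a) := by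
    rw [← map_mul, ← map_mul]
    congr 1
    group
  rw [sub_mul (of k G ⁅a, b⁆), ← hab, map_mul]
  noncomm_ring

theorem augSubmodule_mul_augSubmodule_le (A N : Subgroup G) :
    augSubmodule k A * augSubmodule k N ≤
      augSubmodule k N * augSubmodule k A + augSubmodule k ⁅A, N⁆ * ⊤ := by
  rw [augSubmodule, augSubmodule, span_mul_span, span_le]
  rintro _ ⟨_, ⟨a, ha, rfl⟩, _, ⟨b, hb, rfl⟩, rfl⟩
  change (of k G a - 1) * (of k G b - 1) ∈ _
  rw [of_sub_one_mul_of_sub_one]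
  exact add_mem (mem_sup_left (mul_mem_mul (subset_span ⟨b, hb, rfl⟩) (subset_span ⟨a, ha, rfl⟩)))
    (mem_sup_right (mul_mem_mul
      (subset_span ⟨⁅a, b⁆, Subgroup.commutator_mem_commutator ha hb, rfl⟩) trivial))

def subOneMemSubgroup (P : Submodule k (MonoidAlgebra k G)) (hP : P * ⊤ ≤ P) : Subgroup G where
  carrier := {g | of k G g - 1 ∈ P}
  one_mem' := by
    change of k G 1 - 1 ∈ P
    rw [map_one, sub_self]
    exact zero_mem P
  mul_mem' {x y} hx hy := by
    have : of k G (x * y) - 1 = (of k G x - 1) * of k G y + (of k G y - 1) := by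
      rw [map_mul]; noncomm_ring
    change _ ∈ P
    rw [this]
    exact add_mem (hP (mul_mem_mul hx trivial)) hy
  inv_mem' {x} hx := by
    have : of k G x⁻¹ - 1 = -((of k G x - 1) * of k G x⁻¹) := by
      rw [sub_mul, one_mul, ← map_mul, mul_inv_cancel, map_one, neg_sub]
    change _ ∈ P
    rw [this]
    exact neg_mem (hP (mul_mem_mul hx trivial))

theorem augSubmodule_le_iff {H : Subgroup G} {P : Submodule k (MonoidAlgebra k G)}
    (hP : P * ⊤ ≤ P) : augSubmodule k H ≤ P ↔ H ≤ subOneMemSubgroup P hP := by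
  refine ⟨fun h g hg => h (subset_span ⟨g, hg, rfl⟩), fun h => span_le.2 ?_⟩
  rintro _ ⟨g, hg, rfl⟩
  exact h hg

theorem augSubmodule_commutator_mul_top_le (A N : Subgroup G) :
    augSubmodule k ⁅A, N⁆ * ⊤ ≤
      (augSubmodule k N * augSubmodule k A + augSubmodule k A * augSubmodule k N) * ⊤ := by
  set P := (augSubmodule k N * augSubmodule k A + augSubmodule k A * augSubmodule k N) * ⊤
  have hP : P * ⊤ ≤ P := (mul_top_mul_top _).le
  refine (mul_le_mul_left ((augSubmodule_le_iff hP).2 ?_) ⊤).trans hP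
  refine Subgroup.commutator_le.2 fun a ha b hb => ?_
  have : of k G ⁅a, b⁆ - 1 = ((of k G a - 1) * (of k G b - 1) - (of k G b - 1) * (of k G a - 1)) *
      of k G (b * a)⁻¹ := by
    rw [of_sub_one_mul_of_sub_one, add_sub_cancel_left, mul_assoc, ← map_mul, mul_inv_cancel,
      map_one, mul_one]
  change _ ∈ P
  rw [this]
  refine mul_mem_mul (sub_mem (mem_sup_right ?_) (mem_sup_left ?_)) trivial
  · exact mul_mem_mul (subset_span ⟨a, ha, rfl⟩) (subset_span ⟨b, hb, rfl⟩)
  · exact mul_mem_mul (subset_span ⟨b, hb, rfl⟩) (subset_span ⟨a, ha, rfl⟩)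

theorem augSubmodule_mul_add_mul_augSubmodule (A N : Subgroup G) [N.Normal] :
    augSubmodule k N * (augSubmodule k A * ⊤) + augSubmodule k A * ⊤ * augSubmodule k N =
      augSubmodule k N * (augSubmodule k A * ⊤) + augSubmodule k ⁅A, N⁆ * ⊤ := by
  have hcomm : augSubmodule k A * ⊤ * augSubmodule k N =
      augSubmodule k A * augSubmodule k N * ⊤ := by
    rw [mul_assoc, ← augSubmodule_mul_top_comm, mul_assoc]
  rw [hcomm, ← mul_assoc]
  refine le_antisymm (add_le le_self_add ?_) (add_le le_self_add ?_)
  · calc augSubmodule k A * augSubmodule k N * ⊤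
        ≤ (augSubmodule k N * augSubmodule k A + augSubmodule k ⁅A, N⁆ * ⊤) * ⊤ :=
          mul_le_mul_left (augSubmodule_mul_augSubmodule_le A N) ⊤
      _ = _ := by rw [add_mul, mul_top_mul_top]
  · exact (augSubmodule_commutator_mul_top_le A N).trans (add_mul _ _ _).le

end MonoidAlgebra

theorem Jrel_eq_sum_gammaRel_general (k : Type*) [Field k]
    (G : Type*) [Group G]
    (N : Subgroup G) [N.Normal] (n : ℕ) :
    Jrel (Submodule.span k {z : MonoidAlgebra k G | ∃ h ∈ N, z = MonoidAlgebra.of k G h - 1})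
        (Submodule.span k {z : MonoidAlgebra k G | ∃ h : G, z = MonoidAlgebra.of k G h - 1}) n =
      ∑ i ∈ Finset.range (n + 1),
        (Submodule.span k
            {z : MonoidAlgebra k G | ∃ h ∈ N, z = MonoidAlgebra.of k G h - 1}) ^ (n + 1 - i) *
          (Submodule.span k
            {z : MonoidAlgebra k G | ∃ h ∈ gammaRel N i, z = MonoidAlgebra.of k G h - 1} * ⊤) := by
  have hG : span k {z : MonoidAlgebra k G | ∃ h : G, z = of k G h - 1} = augSubmodule k ⊤ := by
    simp [augSubmodule]
  rw [hG]
  exact Jrel_eq_gradedSum augSubmodule_top_mul_top.symm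
    (fun i => augSubmodule_mul_add_mul_augSubmodule (k := k) (gammaRel N i) N) n

/-- For every `n ≥ 1` (here `n` is replaced by `n+1` with `n : ℕ`),
`J_n(N,G) = ∑_{i=1}^{n} I(N)^{n+1−i} · (I(γ_i^G(N))·kG)`. -/
theorem Jrel_eq_sum_gammaRel (p : ℕ) (hp : p.Prime) (k : Type*) [Field k] [CharP k p]
    (G : Type*) [Group G] [Finite G] (hG : ∃ s : ℕ, Nat.card G = p ^ s)
    (N : Subgroup G) [N.Normal] (n : ℕ) :
    Jrel (Submodule.span k {z : MonoidAlgebra k G | ∃ h ∈ N, z = MonoidAlgebra.of k G h - 1})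
        (Submodule.span k {z : MonoidAlgebra k G | ∃ h : G, z = MonoidAlgebra.of k G h - 1}) n =
      ∑ i ∈ Finset.range (n + 1),
        (Submodule.span k
            {z : MonoidAlgebra k G | ∃ h ∈ N, z = MonoidAlgebra.of k G h - 1}) ^ (n + 1 - i) *
          (Submodule.span k
            {z : MonoidAlgebra k G | ∃ h ∈ gammaRel N i, z = MonoidAlgebra.of k G h - 1} * ⊤) :=
  Jrel_eq_sum_gammaRel_general k G N n
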